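/- arXiv:1504.05272 — 2 statements merged into one kernel-verified Lean document; each statement's English description precedes it below -/
import Mathlib

section
/- Let M ≢ 0 (mod 3) and let L be a positive divisor of M with radical L* > 2 and ℓ distinct prime factors. Then J₁(L,M) = φ(L*)·(M²/L* + (−1)^ℓ·(8 − 9ε))/24, where ε = 1 if M is odd, ε = 2 if M ≡ 2 (mod 4) and L* is even, and ε = 0 otherwise. -/
open Finset

/-- `Ik k L M = Σ t^k` over integers `0 < t < M/2` with `gcd(t, L) = 1`. -/
def Ik (k L M : ℕ) : ℕ :=
  ∑ t ∈ (Finset.range M).filter (fun t => 0 < t ∧ 2 * t < M ∧ Nat.gcd t L = 1), t ^ k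

/-- `Jk k L M = Σ u^k` over integers `0 < u < M/2` with `gcd(u, L) = 1` and `u ≡ -M (mod 3)`. -/
def Jk (k L M : ℕ) : ℕ :=
  ∑ t ∈ (Finset.range M).filter
    (fun t => 0 < t ∧ 2 * t < M ∧ Nat.gcd t L = 1 ∧ (t + M) % 3 = 0), t ^ k

/-- The radical of `n`: the product of the distinct prime divisors of `n`. -/
def rad (n : ℕ) : ℕ := ∏ p ∈ n.primeFactors, p

/-!
Coprimality to `L` only depends on the primes of `L`, so `L` may be replaced by its squarefree
radical `N`. Möbius inversion over `d ∣ N`, followed by the substitution `u = d v` (legitimate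
because `3 ∤ d`), gives `J₁(N, M) = Σ_{d ∣ N} μ(d) d T(M/d)` with `T(m) = J₁(1, m)`. For `3 ∤ m`
the summation range of `T(m)` is an arithmetic progression with difference `3`, and
`24 T(m) = m² - 1 + [2 ∣ m] (9 - 6m)`. The identities `Σ μ(d)/d = φ(N)/N`,
`Σ μ(d) d = (-1)^ℓ φ(N)` and `Σ μ(d) = 0` turn this into the main term; the parity correction
runs over the divisors of `gcd(N, M/2)`, which is `N/2` exactly when `M ≡ 2 (mod 4)` and `N` is
even, and `N` otherwise.
-/

open ArithmeticFunction
open scoped ArithmeticFunction.Moebius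

def jkSupport (M : ℕ) : Finset ℕ :=
  (range M).filter (fun t => 0 < t ∧ 2 * t < M ∧ (t + M) % 3 = 0)

theorem Jk_eq_sum_filter_coprime (k L M : ℕ) :
    Jk k L M = ∑ t ∈ (jkSupport M).filter (fun t => t.Coprime L), t ^ k := by
  rw [Jk, jkSupport, filter_filter]
  congr 1
  exact filter_congr fun t _ => by rw [Nat.coprime_iff_gcd_eq_one]; tauto

theorem Jk_one_left (k M : ℕ) : Jk k 1 M = ∑ t ∈ jkSupport M, t ^ k := by
  simp [Jk_eq_sum_filter_coprime]

theorem primeFactors_rad (n : ℕ) : (rad n).primeFactors = n.primeFactors :=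
  Nat.primeFactors_prod_primeFactors n

theorem squarefree_rad (n : ℕ) : Squarefree (rad n) :=
  Finset.squarefree_prod_of_pairwise_isCoprime
    (fun _ hp _ hq hpq => (Nat.coprime_primes (Nat.prime_of_mem_primeFactors hp)
      (Nat.prime_of_mem_primeFactors hq)).mpr hpq |> Nat.coprime_iff_isRelPrime.mp)
    fun _ hp => (Nat.prime_of_mem_primeFactors hp).prime.squarefree

theorem coprime_rad_iff {t n : ℕ} (ht : t ≠ 0) (hn : n ≠ 0) :
    t.Coprime (rad n) ↔ t.Coprime n := by
  rw [← Nat.disjoint_primeFactors ht (squarefree_rad n).ne_zero, primeFactors_rad,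
    Nat.disjoint_primeFactors ht hn]

theorem Jk_rad (k M : ℕ) {L : ℕ} (hL : L ≠ 0) : Jk k (rad L) M = Jk k L M := by
  simp only [Jk_eq_sum_filter_coprime]
  congr 1
  refine filter_congr fun t ht => coprime_rad_iff ?_ hL
  simp only [jkSupport, mem_filter] at ht
  omega

theorem sum_divisors_moebius_eq_zero {R : Type*} [Ring R] {n : ℕ} (hn : n ≠ 1) :
    ∑ d ∈ n.divisors, (μ d : R) = 0 := by
  have h := coe_mul_zeta_apply (f := (μ : ArithmeticFunction R)) (x := n)
  rw [coe_moebius_mul_coe_zeta, one_apply_ne hn] at h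
  simpa only [intCoe_apply] using h.symm

theorem sum_filter_coprime_eq_sum_moebius {R : Type*} [CommRing R] (s : Finset ℕ)
    (f : ℕ → R) {N : ℕ} (hN : N ≠ 0) :
    ∑ t ∈ s.filter (fun t => t.Coprime N), f t
      = ∑ d ∈ N.divisors, (μ d : R) * ∑ t ∈ s.filter (d ∣ ·), f t := by
  have hind : ∀ t, (if t.Coprime N then (1 : R) else 0)
      = ∑ d ∈ N.divisors.filter (· ∣ t), (μ d : R) := by
    intro t
    have hdiv : N.divisors.filter (· ∣ t) = (t.gcd N).divisors := by
      ext d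
      simp only [mem_filter, Nat.mem_divisors, Nat.dvd_gcd_iff, Nat.gcd_ne_zero_right hN, hN,
        ne_eq, not_false_eq_true, and_true]
      tauto
    rw [hdiv]
    by_cases h : t.Coprime N
    · rw [if_pos h, Nat.Coprime.gcd_eq_one h]; simp
    · rw [if_neg h, sum_divisors_moebius_eq_zero h]
  calc ∑ t ∈ s.filter (fun t => t.Coprime N), f t
      = ∑ t ∈ s, ∑ d ∈ N.divisors, if d ∣ t then (μ d : R) * f t else 0 := by
        rw [sum_filter]
        refine sum_congr rfl fun t _ => ?_
        rw [← sum_filter, ← sum_mul, ← hind, ite_mul, one_mul, zero_mul]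
    _ = ∑ d ∈ N.divisors, (μ d : R) * ∑ t ∈ s.filter (d ∣ ·), f t := by
        rw [sum_comm]; simp_rw [mul_sum, sum_filter]

theorem jkSupport_filter_dvd {d M : ℕ} (hd : d ≠ 0) (hdM : d ∣ M) (h3 : ¬ 3 ∣ d) :
    (jkSupport M).filter (d ∣ ·) = (jkSupport (M / d)).image (d * ·) := by
  obtain ⟨m, rfl⟩ := hdM
  have hd3 : Nat.Coprime 3 d := (Nat.Prime.coprime_iff_not_dvd Nat.prime_three).mpr h3
  have h3iff : ∀ c, 3 ∣ d * c + d * m ↔ 3 ∣ c + m := fun c => by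
    rw [← mul_add]; exact ⟨hd3.dvd_of_dvd_mul_left, (Dvd.dvd.mul_left · d)⟩
  have hpos : 0 < d := Nat.pos_of_ne_zero hd
  ext t
  simp only [jkSupport, mem_filter, mem_range, mem_image, Nat.mul_div_cancel_left m hpos,
    ← Nat.dvd_iff_mod_eq_zero]
  constructor
  · rintro ⟨⟨-, ht0, ht2, ht3⟩, c, rfl⟩
    have hc2 : 2 * c < m := by
      rw [← Nat.mul_lt_mul_left hpos]; linarith
    exact ⟨c, ⟨by omega, Nat.pos_of_mul_pos_left ht0, hc2, (h3iff c).mp ht3⟩, rfl⟩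
  · rintro ⟨c, ⟨-, hc0, hc2, hc3⟩, rfl⟩
    have h2 : 2 * (d * c) < d * m := by nlinarith
    exact ⟨⟨by omega, Nat.mul_pos hpos hc0, h2, (h3iff c).mpr hc3⟩, dvd_mul_right d c⟩

theorem Jk_eq_sum_moebius {R : Type*} [CommRing R] (k : ℕ) {N M : ℕ} (hNM : N ∣ M)
    (hM3 : ¬ 3 ∣ M) :
    (Jk k N M : R) = ∑ d ∈ N.divisors, (μ d : R) * (d : R) ^ k * (Jk k 1 (M / d) : R) := by
  have hN : N ≠ 0 := ne_zero_of_dvd_ne_zero (by rintro rfl; exact hM3 (dvd_zero 3)) hNM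
  rw [Jk_eq_sum_filter_coprime, Nat.cast_sum, sum_filter_coprime_eq_sum_moebius _ _ hN]
  refine sum_congr rfl fun d hd => ?_
  have hdM : d ∣ M := (Nat.dvd_of_mem_divisors hd).trans hNM
  have hd0 : d ≠ 0 := Nat.ne_of_gt (Nat.pos_of_mem_divisors hd)
  rw [jkSupport_filter_dvd hd0 hdM fun h => hM3 (h.trans hdM),
    sum_image fun a _ b _ h => Nat.eq_of_mul_eq_mul_left (Nat.pos_of_ne_zero hd0) h,
    Jk_one_left, mul_assoc, Nat.cast_sum, mul_sum]
  simp [mul_pow, mul_sum]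

theorem sum_jkSupport_of_mem_iff {m n r : ℕ}
    (hmem : ∀ t, t ∈ jkSupport m ↔ r ≤ t ∧ t % 3 = r % 3 ∧ t < 3 * n + r) :
    ∑ t ∈ jkSupport m, (t : ℚ) = 3 * n * (n - 1) / 2 + r * n := by
  have himage : jkSupport m = (range n).image (fun j => 3 * j + r) := by
    ext t
    simp only [hmem, mem_image, mem_range]
    exact ⟨fun ht => ⟨(t - r) / 3, by omega, by omega⟩, by rintro ⟨j, hj, rfl⟩; omega⟩
  rw [himage, sum_image fun a _ b _ h => by omega]
  clear hmem himage
  induction n with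
  | zero => simp
  | succ n ih => rw [sum_range_succ, ih]; push_cast; ring

theorem Jk_one_one_eq {m : ℕ} (hm : ¬ 3 ∣ m) :
    (Jk 1 1 m : ℚ) = ((m : ℚ) ^ 2 - 1 + if 2 ∣ m then 9 - 6 * (m : ℚ) else 0) / 24 := by
  simp only [Jk_one_left, pow_one, Nat.cast_sum]
  obtain ⟨k, c, hc, rfl⟩ : ∃ k c, (c = 1 ∨ c = 2 ∨ c = 4 ∨ c = 5) ∧ m = 6 * k + c :=
    ⟨m / 6, m % 6, by omega, by omega⟩
  rcases hc with rfl | rfl | rfl | rfl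
  · rw [sum_jkSupport_of_mem_iff (n := k) (r := 2) fun t => by simp only [jkSupport, mem_filter, mem_range]; omega,
      if_neg (by omega)]
    push_cast; ring
  · rw [sum_jkSupport_of_mem_iff (n := k) (r := 1) fun t => by simp only [jkSupport, mem_filter, mem_range]; omega,
      if_pos (by omega)]
    push_cast; ring
  · rw [sum_jkSupport_of_mem_iff (n := k) (r := 2) fun t => by simp only [jkSupport, mem_filter, mem_range]; omega,
      if_pos (by omega)]
    push_cast; ring
  · rw [sum_jkSupport_of_mem_iff (n := k + 1) (r := 1) fun t => by simp only [jkSupport, mem_filter, mem_range]; omega,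
      if_neg (by omega)]
    push_cast; ring

theorem totient_eq_prod_sub_one_of_squarefree {n : ℕ} (hn : Squarefree n) :
    (n.totient : ℚ) = ∏ p ∈ n.primeFactors, ((p : ℚ) - 1) := by
  rw [Nat.totient_eq_div_primeFactors_mul, Nat.prod_primeFactors_of_squarefree hn,
    Nat.div_self (Nat.pos_of_ne_zero hn.ne_zero), one_mul, Nat.cast_prod]
  exact prod_congr rfl fun p hp => Nat.cast_pred (Nat.pos_of_mem_primeFactors hp)

theorem sum_divisors_moebius_mul_self {n : ℕ} (hn : Squarefree n) :
    ∑ d ∈ n.divisors, (μ d : ℚ) * d = (-1) ^ n.primeFactors.card * n.totient := by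
  have h := isMultiplicative_id.natCast (R := ℚ) |>.prodPrimeFactors_one_sub_of_squarefree _ hn
  simp only [natCoe_apply, id_apply] at h
  rw [← h, totient_eq_prod_sub_one_of_squarefree hn, ← prod_const, ← prod_mul_distrib]
  exact prod_congr rfl fun p _ => by ring

theorem sum_divisors_moebius_div_self {n : ℕ} (hn : Squarefree n) :
    ∑ d ∈ n.divisors, (μ d : ℚ) / d = n.totient / n := by
  let inv : ArithmeticFunction ℚ := ⟨fun d => (d : ℚ)⁻¹, by simp⟩
  have hinv : inv.IsMultiplicative :=
    ⟨by simp [inv], fun {m n} _ => by simp [inv, mul_comm]⟩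
  have h := hinv.prodPrimeFactors_one_sub_of_squarefree _ hn
  have hn0 : (n : ℚ) ≠ 0 := Nat.cast_ne_zero.mpr hn.ne_zero
  rw [eq_div_iff hn0, Nat.totient_eq_mul_prod_factors, mul_comm]
  simpa [inv, div_eq_mul_inv] using congrArg (· * (n : ℚ)) h.symm

theorem Jk_one_eq {N M : ℕ} (hN : Squarefree N) (hNM : N ∣ M) (hM3 : ¬ 3 ∣ M) :
    (Jk 1 N M : ℚ) = ((M : ℚ) ^ 2 * N.totient / N - (-1) ^ N.primeFactors.card * N.totient
      + ∑ d ∈ N.divisors.filter (fun d => 2 ∣ M / d), (μ d : ℚ) * (9 * d - 6 * M)) / 24 := by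
  have hterm : ∀ d ∈ N.divisors, (μ d : ℚ) * (d : ℚ) ^ 1 * (Jk 1 1 (M / d) : ℚ)
      = ((M : ℚ) ^ 2 * ((μ d : ℚ) / d) - (μ d : ℚ) * d
        + if 2 ∣ M / d then (μ d : ℚ) * (9 * d - 6 * M) else 0) / 24 := by
    intro d hd
    have hdM : d ∣ M := (Nat.dvd_of_mem_divisors hd).trans hNM
    have hd0 : (d : ℚ) ≠ 0 := Nat.cast_ne_zero.mpr (Nat.ne_of_gt (Nat.pos_of_mem_divisors hd))
    rw [Jk_one_one_eq fun h => hM3 (h.trans (Nat.div_dvd_of_dvd hdM)), Nat.cast_div hdM hd0]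
    split_ifs
    · field_simp
    · field_simp; ring
  rw [Jk_eq_sum_moebius 1 hNM hM3, sum_congr rfl hterm, ← sum_div, sum_add_distrib,
    sum_sub_distrib, ← mul_sum, sum_divisors_moebius_div_self hN,
    sum_divisors_moebius_mul_self hN, sum_filter, mul_div_assoc]

theorem divisors_filter_two_dvd_div {N M : ℕ} (hM : 2 ∣ M) (hNM : N ∣ M) :
    N.divisors.filter (fun d => 2 ∣ M / d) = (N.gcd (M / 2)).divisors := by
  rcases eq_or_ne N 0 with rfl | hN
  · simp [zero_dvd_iff.mp hNM]
  ext d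
  simp only [mem_filter, Nat.mem_divisors, Nat.dvd_gcd_iff, Nat.gcd_ne_zero_left hN, hN,
    ne_eq, not_false_eq_true, and_true]
  refine and_congr_right fun hdN => ?_
  rw [Nat.dvd_div_iff_mul_dvd (hdN.trans hNM), Nat.dvd_div_iff_mul_dvd hM, mul_comm]

theorem gcd_div_two_of_mod_four_eq_two {N M : ℕ} (hNM : N ∣ M) (hM : M % 4 = 2) (hN : 2 ∣ N) :
    N.gcd (M / 2) = N / 2 := by
  obtain ⟨n, rfl⟩ := hN
  have hM2 : Nat.Coprime 2 (M / 2) := Nat.coprime_two_left.mpr (Nat.odd_iff.mpr (by omega))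
  rw [Nat.mul_div_cancel_left n two_pos, hM2.gcd_mul_left_cancel n]
  exact Nat.gcd_eq_left (Nat.dvd_div_of_mul_dvd hNM)

theorem gcd_div_two_eq_self {N M : ℕ} (hN : Squarefree N) (hNM : N ∣ M) (hM : 2 ∣ M)
    (h : ¬ (M % 4 = 2 ∧ 2 ∣ N)) : N.gcd (M / 2) = N := by
  refine Nat.gcd_eq_left (Nat.dvd_div_of_mul_dvd ?_)
  by_cases h2N : 2 ∣ N
  · obtain ⟨n, rfl⟩ := h2N
    have hn : Nat.Coprime 4 n := (Nat.squarefree_mul_iff.mp hN).1.pow_left 2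
    rw [← mul_assoc]
    exact hn.mul_dvd_of_dvd_of_dvd (by omega) (Dvd.dvd.trans (dvd_mul_left n 2) hNM)
  · exact ((Nat.prime_two.coprime_iff_not_dvd).mpr h2N).mul_dvd_of_dvd_of_dvd hM hNM

theorem sum_divisors_moebius_mul_sub {n : ℕ} (hn : Squarefree n) (hn1 : n ≠ 1) (a b : ℚ) :
    ∑ d ∈ n.divisors, (μ d : ℚ) * (a * d - b)
      = a * ((-1) ^ n.primeFactors.card * n.totient) := by
  simp_rw [mul_sub, sum_sub_distrib, mul_left_comm _ a, ← mul_sum, ← sum_mul,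
    sum_divisors_moebius_mul_self hn, sum_divisors_moebius_eq_zero hn1, zero_mul, sub_zero]

theorem card_primeFactors_two_mul_of_odd {n : ℕ} (hn : Odd n) :
    (2 * n).primeFactors.card = n.primeFactors.card + 1 := by
  rw [(Nat.coprime_two_left.mpr hn).primeFactors_mul, Nat.prime_two.primeFactors,
    card_union_of_disjoint (disjoint_singleton_left.mpr fun h2 =>
      Nat.not_even_iff_odd.mpr hn (even_iff_two_dvd.mpr (Nat.dvd_of_mem_primeFactors h2))),
    card_singleton, add_comm]

theorem sum_filter_two_dvd_div {N M : ℕ} (hN : Squarefree N) (hN2 : 2 < N) (hNM : N ∣ M) :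
    ∑ d ∈ N.divisors.filter (fun d => 2 ∣ M / d), (μ d : ℚ) * (9 * d - 6 * M)
      = 9 * ((-1) ^ N.primeFactors.card * N.totient)
        * (if Odd M then 0 else if M % 4 = 2 ∧ 2 ∣ N then -1 else 1) := by
  rcases Nat.even_or_odd M with hM | hM
  · rw [if_neg (Nat.not_odd_iff_even.mpr hM), divisors_filter_two_dvd_div hM.two_dvd hNM]
    by_cases h : M % 4 = 2 ∧ 2 ∣ N
    · rw [if_pos h, gcd_div_two_of_mod_four_eq_two hNM h.1 h.2]
      obtain ⟨n, rfl⟩ := h.2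
      have hn : Odd n := Nat.coprime_two_left.mp (Nat.squarefree_mul_iff.mp hN).1
      rw [Nat.mul_div_cancel_left n two_pos, sum_divisors_moebius_mul_sub
        (Nat.squarefree_mul_iff.mp hN).2.2 (by omega), Nat.totient_two_mul_of_odd hn,
        card_primeFactors_two_mul_of_odd hn]
      ring
    · rw [if_neg h, gcd_div_two_eq_self hN hNM hM.two_dvd h,
        sum_divisors_moebius_mul_sub hN (by omega)]
      ring
  · rw [if_pos hM, filter_false_of_mem fun d hd h2 => ?_, sum_empty, mul_zero]
    exact Nat.not_even_iff_odd.mpr hM (even_iff_two_dvd.mpr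
      (h2.trans (Nat.div_dvd_of_dvd ((Nat.dvd_of_mem_divisors hd).trans hNM))))

theorem stmt_6 (L M : ℕ) (hL : 0 < L) (hLM : L ∣ M) (hM3 : ¬ (3 ∣ M))
    (hrad : 2 < rad L) :
    (Jk 1 L M : ℚ) =
      (Nat.totient (rad L) : ℚ) *
        ((M : ℚ) ^ 2 / (rad L : ℚ) +
          (-1 : ℚ) ^ (L.primeFactors.card) *
            (8 - 9 * (if Odd M then 1 else if M % 4 = 2 ∧ 2 ∣ rad L then 2 else 0))) / 24 := by
  have hN : Squarefree (rad L) := squarefree_rad L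
  have hNM : rad L ∣ M := (Nat.prod_primeFactors_dvd L).trans hLM
  have hN0 : (rad L : ℚ) ≠ 0 := Nat.cast_ne_zero.mpr hN.ne_zero
  rw [← Jk_rad 1 M hL.ne', Jk_one_eq hN hNM hM3, sum_filter_two_dvd_div hN hrad hNM,
    primeFactors_rad]
  split_ifs <;> field_simp <;> ring
end

section
/- Let N = p^m where p > 3 is prime and m ≥ 1. Then t_N = (p^{2m} − p^{2m−2} − 2p^m + 2p^{m−1})/6 + c, where c = 0 if p ≡ 1 (mod 3), c = 1/3 if p ≡ 2 (mod 3) and m is odd, and c = −1/3 if p ≡ 2 (mod 3) and m is even. -/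
open Finset

/-- The quantity t_N for N not divisible by 3. -/
def tNum (N : ℕ) : ℕ :=
  Ik 0 N N + 2 * ∑ a ∈ (Finset.range N).filter (fun a => 0 < a ∧ 3 * a < N),
    Ik 0 (Nat.gcd a N) (N - 3 * a) + Jk 0 N N

/-!
Let `tNumAll N` be `tNum N` with every coprimality condition dropped. For `N = p ^ (k + 1)` an
object counted by `tNumAll N` (a `t`, or a pair `(a, t)`) violates the coprimality condition of
`tNum N` exactly when `p` divides all its entries, and dividing by `p` matches these objects with
those counted by `tNumAll (p ^ k)` (the congruence mod 3 survives because `3 ∤ p`). Hence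
`tNum (p ^ (k + 1)) = tNumAll (p ^ (k + 1)) - tNumAll (p ^ k)`. Without coprimality everything is
explicit, and `tNumAll (N + 6) = tNumAll N + 2 N + 4` for odd `N` gives
`6 tNumAll N = (N - 1) ^ 2 + 2 [N ≡ 2 mod 3]` whenever `gcd (N, 6) = 1`.
-/

namespace Nat

lemma coprime_gcd_prime_pow_iff {p k : ℕ} (hp : p.Prime) (hk : k ≠ 0) (a t : ℕ) :
    Coprime t (gcd a (p ^ k)) ↔ ¬(p ∣ t ∧ p ∣ a) := by
  rw [coprime_iff_gcd_eq_one, ← gcd_assoc, ← coprime_iff_gcd_eq_one,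
    coprime_pow_right_iff (pos_of_ne_zero hk), coprime_comm, hp.coprime_iff_not_dvd, dvd_gcd_iff]

lemma coprime_prime_pow_succ_iff {p : ℕ} (hp : p.Prime) (k t : ℕ) :
    Coprime t (p ^ (k + 1)) ↔ ¬ p ∣ t := by
  simpa using coprime_gcd_prime_pow_iff hp k.add_one_ne_zero 0 t

lemma pow_mod_three_eq_two_iff {p : ℕ} (hp : ¬ 3 ∣ p) (n : ℕ) :
    p ^ n % 3 = 2 ↔ p % 3 = 2 ∧ Odd n := by
  induction n with
  | zero => simp
  | succ n ih =>
    have hpn : ¬ 3 ∣ p ^ n := fun h => hp (prime_three.dvd_of_dvd_pow h)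
    have hp' : p % 3 = 1 ∨ p % 3 = 2 := by omega
    have hpn' : p ^ n % 3 = 1 ∨ p ^ n % 3 = 2 := by omega
    rw [pow_succ, mul_mod, odd_add_one]
    rcases hp' with hp' | hp' <;> rcases hpn' with hpn' | hpn' <;> simp_all

end Nat

lemma filter_range_and_dvd {p : ℕ} (hp : 0 < p) (M : ℕ) (P : ℕ → Prop) [DecidablePred P] :
    {t ∈ range (p * M) | P t ∧ p ∣ t} = image (p * ·) {s ∈ range M | P (p * s)} := by
  ext t
  simp only [mem_filter, mem_range, mem_image]
  constructor
  · rintro ⟨ht, hPt, s, rfl⟩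
    exact ⟨s, ⟨Nat.lt_of_mul_lt_mul_left ht, hPt⟩, rfl⟩
  · rintro ⟨s, ⟨hs, hPs⟩, rfl⟩
    exact ⟨Nat.mul_lt_mul_of_pos_left hs hp, hPs, dvd_mul_right p s⟩

lemma pos_and_lt_mul_iff {p : ℕ} (hp : 0 < p) (c s M : ℕ) :
    (0 < p * s ∧ c * (p * s) < p * M) ↔ (0 < s ∧ c * s < M) := by
  rw [Nat.mul_pos_iff_of_pos_left hp, mul_left_comm, Nat.mul_lt_mul_left hp]

lemma filter_range_two_mul_lt (M : ℕ) :
    {t ∈ range M | 0 < t ∧ 2 * t < M} = Ioc 0 ((M - 1) / 2) := by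
  ext t
  simp only [mem_filter, mem_range, mem_Ioc]
  omega

lemma card_filter_Ioc_add_mod_three (c H : ℕ) :
    #{t ∈ Ioc 0 H | (t + c) % 3 = 0} = (H + c % 3) / 3 := by
  induction H with
  | zero => simp
  | succ H ih =>
    rw [show Ioc 0 (H + 1) = insert (H + 1) (Ioc 0 H) by ext; simp; omega, filter_insert]
    split_ifs with h
    · rw [card_insert_of_notMem (by simp), ih]
      omega
    · rw [ih]
      omega

lemma card_filter_not_dvd_add_card {p M : ℕ} (hp : 0 < p) {P Q R : ℕ → Prop}
    [DecidablePred P] [DecidablePred Q] [DecidablePred R]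
    (hQ : ∀ t, Q t ↔ P t ∧ ¬ p ∣ t) (hR : ∀ s, R s ↔ P (p * s)) :
    #{t ∈ range (p * M) | Q t} + #{s ∈ range M | R s} = #{t ∈ range (p * M) | P t} := by
  have hdvd : #{s ∈ range M | R s} = #{t ∈ range (p * M) | P t ∧ p ∣ t} := by
    rw [filter_range_and_dvd hp, card_image_of_injective _ (mul_right_injective₀ hp.ne'),
      filter_congr fun s _ => hR s]
  rw [filter_congr fun t _ => hQ t, hdvd, ← filter_filter, ← filter_filter, add_comm,
    card_filter_add_card_filter_not]

lemma Ik_zero_eq_card (L M : ℕ) :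
    Ik 0 L M = #{t ∈ range M | 0 < t ∧ 2 * t < M ∧ Nat.gcd t L = 1} := by
  simp [Ik]

lemma Jk_zero_eq_card (L M : ℕ) :
    Jk 0 L M = #{t ∈ range M | 0 < t ∧ 2 * t < M ∧ Nat.gcd t L = 1 ∧ (t + M) % 3 = 0} := by
  simp [Jk]

lemma Ik_congr {L L' : ℕ} (h : ∀ t, Nat.Coprime t L ↔ Nat.Coprime t L') (k M : ℕ) :
    Ik k L M = Ik k L' M := by
  simp only [Ik, ← Nat.coprime_iff_gcd_eq_one, h]

lemma Ik_zero_one (M : ℕ) : Ik 0 1 M = (M - 1) / 2 := by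
  simp [Ik_zero_eq_card, filter_range_two_mul_lt]

lemma Jk_zero_one (M : ℕ) : Jk 0 1 M = ((M - 1) / 2 + M % 3) / 3 := by
  rw [Jk_zero_eq_card, ← card_filter_Ioc_add_mod_three, ← filter_range_two_mul_lt,
    filter_filter]
  simp only [Nat.gcd_one_right, true_and, and_assoc]

lemma Ik_zero_add {p L : ℕ} (hp : 0 < p) (hL : ∀ t, Nat.Coprime t L ↔ ¬ p ∣ t) (M : ℕ) :
    Ik 0 L (p * M) + Ik 0 1 M = Ik 0 1 (p * M) := by
  simp only [Ik_zero_eq_card, Nat.gcd_one_right, and_true]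
  refine card_filter_not_dvd_add_card hp (fun t => ?_) (fun s => (pos_and_lt_mul_iff hp 2 s M).symm)
  rw [← Nat.coprime_iff_gcd_eq_one, hL, and_assoc]

lemma Jk_zero_add {p L : ℕ} (hp : 0 < p) (hp3 : Nat.Coprime 3 p)
    (hL : ∀ t, Nat.Coprime t L ↔ ¬ p ∣ t) (M : ℕ) :
    Jk 0 L (p * M) + Jk 0 1 M = Jk 0 1 (p * M) := by
  simp only [Jk_zero_eq_card, Nat.gcd_one_right, true_and]
  refine card_filter_not_dvd_add_card hp (fun t => ?_) (fun s => ?_)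
  · rw [← Nat.coprime_iff_gcd_eq_one, hL]
    tauto
  · rw [← and_assoc, ← pos_and_lt_mul_iff hp 2 s M, ← Nat.dvd_iff_mod_eq_zero,
      ← Nat.dvd_iff_mod_eq_zero, ← mul_add, hp3.dvd_mul_left, and_assoc]

lemma sum_Ik_gcd_add {p L : ℕ} (hp : 0 < p)
    (hL : ∀ a t, Nat.Coprime t (Nat.gcd a L) ↔ ¬(p ∣ t ∧ p ∣ a)) (M : ℕ) :
    ∑ a ∈ range (p * M) with 0 < a ∧ 3 * a < p * M, Ik 0 (Nat.gcd a L) (p * M - 3 * a)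
        + ∑ b ∈ range M with 0 < b ∧ 3 * b < M, Ik 0 1 (M - 3 * b)
      = ∑ a ∈ range (p * M) with 0 < a ∧ 3 * a < p * M, Ik 0 1 (p * M - 3 * a) := by
  set s := {a ∈ range (p * M) | 0 < a ∧ 3 * a < p * M}
  have hcoprime : ∑ a ∈ s with ¬ p ∣ a, Ik 0 (Nat.gcd a L) (p * M - 3 * a)
      = ∑ a ∈ s with ¬ p ∣ a, Ik 0 1 (p * M - 3 * a) :=
    sum_congr rfl fun a ha => Ik_congr (fun t => by simp [hL, (mem_filter.1 ha).2]) _ _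
  have hdvd : ∑ a ∈ s with p ∣ a, Ik 0 (Nat.gcd a L) (p * M - 3 * a)
        + ∑ b ∈ range M with 0 < b ∧ 3 * b < M, Ik 0 1 (M - 3 * b)
      = ∑ a ∈ s with p ∣ a, Ik 0 1 (p * M - 3 * a) := by
    have hinj := (mul_right_injective₀ hp.ne').injOn
      (s := ({b ∈ range M | 0 < p * b ∧ 3 * (p * b) < p * M} : Finset ℕ))
    rw [filter_filter, filter_range_and_dvd hp, sum_image hinj, sum_image hinj,
      filter_congr fun b _ => pos_and_lt_mul_iff hp 3 b M, ← sum_add_distrib]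
    refine sum_congr rfl fun b _ => ?_
    rw [mul_left_comm 3 p b, ← Nat.mul_sub]
    exact Ik_zero_add hp (fun t => by simp [hL]) _
  rw [← sum_filter_add_sum_filter_not s (p ∣ ·), hcoprime,
    ← sum_filter_add_sum_filter_not s (p ∣ ·), ← hdvd]
  ring

def tNumAll (N : ℕ) : ℕ :=
  Ik 0 1 N + 2 * ∑ a ∈ (Finset.range N).filter (fun a => 0 < a ∧ 3 * a < N),
    Ik 0 1 (N - 3 * a) + Jk 0 1 N

theorem tNum_add_tNumAll {p : ℕ} (hp : p.Prime) (hp3 : ¬ 3 ∣ p) (k : ℕ) :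
    tNum (p ^ (k + 1)) + tNumAll (p ^ k) = tNumAll (p ^ (k + 1)) := by
  have hcop := Nat.coprime_prime_pow_succ_iff hp k
  have hI := Ik_zero_add hp.pos hcop (p ^ k)
  have hJ := Jk_zero_add hp.pos (Nat.prime_three.coprime_iff_not_dvd.2 hp3) hcop (p ^ k)
  have hS := sum_Ik_gcd_add hp.pos (Nat.coprime_gcd_prime_pow_iff hp k.add_one_ne_zero) (p ^ k)
  rw [← pow_succ'] at hI hJ hS
  unfold tNum tNumAll
  omega

lemma filter_range_three_mul_lt (N : ℕ) :
    {a ∈ range N | 0 < a ∧ 3 * a < N} = Ico 1 ((N - 1) / 3 + 1) := by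
  ext a
  simp only [mem_filter, mem_range, mem_Ico]
  omega

lemma tNumAll_eq (N : ℕ) :
    tNumAll N = (N - 1) / 2 + 2 * ∑ i ∈ range ((N - 1) / 3), (N - 3 * (1 + i) - 1) / 2
      + ((N - 1) / 2 + N % 3) / 3 := by
  simp only [tNumAll, Ik_zero_one, Jk_zero_one, filter_range_three_mul_lt, sum_Ico_eq_sum_range,
    Nat.add_sub_cancel]

lemma tNumAll_add_six {N : ℕ} (hN : Odd N) : tNumAll (N + 6) = tNumAll N + 2 * N + 4 := by
  obtain ⟨j, rfl⟩ := hN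
  rw [tNumAll_eq, tNumAll_eq, show (2 * j + 1 + 6 - 1) / 3 = (2 * j + 1 - 1) / 3 + 2 by omega,
    sum_range_succ', sum_range_succ']
  have hshift : ∀ i ∈ range ((2 * j + 1 - 1) / 3),
      (2 * j + 1 + 6 - 3 * (1 + (i + 1 + 1)) - 1) / 2 = (2 * j + 1 - 3 * (1 + i) - 1) / 2 :=
    fun i _ => by omega
  rw [sum_congr rfl hshift]
  omega

theorem cast_tNumAll {N : ℕ} (hN2 : Odd N) (hN3 : ¬ 3 ∣ N) :
    (tNumAll N : ℚ) = ((N : ℚ) - 1) ^ 2 / 6 + if N % 3 = 2 then 1 / 3 else 0 := by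
  induction N using Nat.strong_induction_on with
  | _ N ih =>
  rcases lt_or_ge N 6 with hN | hN
  · interval_cases N <;> norm_num [tNumAll_eq, Nat.odd_iff] at *
  · obtain ⟨n, rfl⟩ := Nat.exists_eq_add_of_le' hN
    have hn2 : Odd n := (Nat.odd_add.1 hN2).2 (by decide)
    have hn3 : ¬ 3 ∣ n := by omega
    rw [tNumAll_add_six hn2]
    push_cast
    rw [ih n (by omega) hn2 hn3, show (n + 6) % 3 = n % 3 by omega]
    ring

theorem stmt_12 (p m : ℕ) (hp : p.Prime) (hp3 : 3 < p) (hm : 1 ≤ m) :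
    (tNum (p ^ m) : ℚ) =
      ((p : ℚ) ^ (2 * m) - (p : ℚ) ^ (2 * m - 2) - 2 * (p : ℚ) ^ m + 2 * (p : ℚ) ^ (m - 1)) / 6 +
        (if p % 3 = 1 then 0
         else if Odd m then (1 : ℚ) / 3 else -(1 : ℚ) / 3) := by
  obtain ⟨k, rfl⟩ : ∃ k, m = k + 1 := ⟨m - 1, by omega⟩
  have h3p : ¬ 3 ∣ p := fun h => by
    have := (Nat.prime_dvd_prime_iff_eq Nat.prime_three hp).1 h
    omega
  have hodd : Odd p := hp.odd_of_ne_two (by omega)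
  have h3pow (n : ℕ) : ¬ 3 ∣ p ^ n := fun h => h3p (Nat.prime_three.dvd_of_dvd_pow h)
  have hsub : (tNum (p ^ (k + 1)) : ℚ) = tNumAll (p ^ (k + 1)) - tNumAll (p ^ k) := by
    rw [← tNum_add_tNumAll hp h3p k]
    push_cast
    ring
  rw [hsub, cast_tNumAll hodd.pow (h3pow _), cast_tNumAll hodd.pow (h3pow _),
    show 2 * (k + 1) - 2 = 2 * k by omega, Nat.add_sub_cancel]
  simp only [Nat.pow_mod_three_eq_two_iff h3p, Nat.odd_add_one]
  push_cast
  rcases (by omega : p % 3 = 1 ∨ p % 3 = 2) with h | h <;> by_cases hk : Odd k <;>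
    simp only [h, hk, OfNat.one_ne_ofNat, OfNat.ofNat_ne_one, and_true, and_false,
      not_true_eq_false, not_false_eq_true, if_true, if_false] <;> ring
end
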